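/- (Invariant of the full strategic Perceptron model.) Let d ∈ ℕ, E = EuclideanSpace ℝ (Fin d), α > 0, w* ∈ E. Let s : ℕ → ℝ with s t ∈ {1, −1}, z : ℕ → E with s t · ⟪z t, w*⟫ ≥ 1 for all t, and x : ℕ → E. Define w : ℕ → E, predicates pos and mistake, and surrogates x̃ by: w 0 = 0; pos t ↔ ⟪x t, w t⟫ ≥ α·‖w t‖; mistake t ↔ ((pos t ∧ s t = −1) ∨ (¬ pos t ∧ s t = 1)); x̃ t = x t − (α/‖w t‖) • (w t) if s t = −1 ∧ ⟪x t, w t⟫ = α·‖w t‖ ∧ w t ≠ 0, and x̃ t = x t otherwise; w (t+1) = w t + s t • (x̃ t) if mistake t, and w (t+1) = w t otherwise. Assume for every t that x t is a best response of the agent with true point z t and budget α to the classifier w t with threshold α, i.e. for all y ∈ E: ((1 if ⟪y, w t⟫ ≥ α·‖w t‖ else 0) − ‖y − z t‖/α) ≤ ((1 if ⟪x t, w t⟫ ≥ α·‖w t‖ else 0) − ‖x t − z t‖/α). Then for every t: ⟪w t, w*⟫ ≥ 0 and s t · ⟪x̃ t, w*⟫ ≥ 1. -/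

import Mathlib

/-!
A best response either stays at the true point `z` or moves straight along `w` onto the
decision boundary, at cost at most `α`: comparing with `z` bounds the cost, and comparing with
the orthogonal projection of `z` onto the boundary forces equality in Cauchy–Schwarz. Hence
`x = z + c • w` with `0 ≤ c` and `c * ‖w‖ ≤ α`, and the surrogate of a negative point is
`z + (c - α / ‖w‖) • w`, a nonpositive step along `w`. So while `⟪w, w⋆⟫ ≥ 0`, the label-signed
margin of the surrogate is at least that of `z`, which is at least `1`; each Perceptron update
adds `s • x̃` and therefore keeps `⟪w, w⋆⟫ ≥ 0`.
-/

open RealInnerProductSpace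

section BestResponse

variable {E : Type*} [NormedAddCommGroup E] [InnerProductSpace ℝ E]

noncomputable def strategicUtility (α : ℝ) (w z y : E) : ℝ :=
  (if ⟪y, w⟫ ≥ α * ‖w‖ then (1 : ℝ) else 0) - ‖y - z‖ / α

def IsBestResponse (α : ℝ) (w z x : E) : Prop :=
  ∀ y, strategicUtility α w z y ≤ strategicUtility α w z x

variable {α : ℝ} {w z x : E}

namespace IsBestResponse

lemma crosses_boundary_of_ne (hα : 0 < α) (h : IsBestResponse α w z x) (hne : x ≠ z) :
    α * ‖w‖ ≤ ⟪x, w⟫ ∧ ⟪z, w⟫ < α * ‖w‖ ∧ ‖x - z‖ ≤ α := by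
  have hcost : 0 < ‖x - z‖ / α := div_pos (norm_pos_iff.mpr (sub_ne_zero.mpr hne)) hα
  have hz := h z
  simp only [strategicUtility, sub_self, norm_zero, zero_div, sub_zero] at hz
  by_cases hxw : α * ‖w‖ ≤ ⟪x, w⟫
  · by_cases hzw : α * ‖w‖ ≤ ⟪z, w⟫
    · simp only [ge_iff_le, hxw, hzw, if_true] at hz
      linarith
    · simp only [ge_iff_le, hxw, hzw, if_true, if_false] at hz
      exact ⟨hxw, lt_of_not_ge hzw, (div_le_one hα).mp (by linarith)⟩
  · simp only [ge_iff_le, hxw, if_false] at hz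
    split_ifs at hz <;> linarith

lemma norm_sub_mul_norm_le (hα : 0 < α) (h : IsBestResponse α w z x) (hne : x ≠ z) :
    ‖x - z‖ * ‖w‖ ≤ α * ‖w‖ - ⟪z, w⟫ := by
  obtain ⟨hxw, hzw, -⟩ := h.crosses_boundary_of_ne hα hne
  have hw : w ≠ 0 := by rintro rfl; simp at hzw
  have hw' : 0 < ‖w‖ := norm_pos_iff.mpr hw
  set δ := α * ‖w‖ - ⟪z, w⟫
  set y := z + (δ / ‖w‖ ^ 2) • w
  have hyw : ⟪y, w⟫ = α * ‖w‖ := by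
    simp only [y, inner_add_left, real_inner_smul_left, real_inner_self_eq_norm_sq]
    field_simp
    ring
  have hyz : ‖y - z‖ = δ / ‖w‖ := by
    rw [add_sub_cancel_left, norm_smul, Real.norm_of_nonneg (by positivity)]
    field_simp
  have hy := h y
  simp only [strategicUtility, if_pos hyw.ge, if_pos hxw, hyz] at hy
  rwa [sub_le_sub_iff_left, div_le_div_iff_of_pos_right hα, le_div_iff₀ hw'] at hy

lemma eq_add_smul_of_ne (hα : 0 < α) (h : IsBestResponse α w z x) (hne : x ≠ z) :
    w ≠ 0 ∧ ⟪x, w⟫ = α * ‖w‖ ∧ x = z + (‖x - z‖ / ‖w‖) • w := by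
  obtain ⟨hxw, hzw, -⟩ := h.crosses_boundary_of_ne hα hne
  have hw : w ≠ 0 := by rintro rfl; simp at hzw
  have hle := h.norm_sub_mul_norm_le hα hne
  have hcs := real_inner_le_norm (x - z) w
  rw [inner_sub_left] at hcs
  have hcs_eq : ⟪x - z, w⟫ = ‖x - z‖ * ‖w‖ := by rw [inner_sub_left]; linarith
  refine ⟨hw, by linarith, ?_⟩
  rw [inner_eq_norm_mul_iff_real] at hcs_eq
  rw [← sub_eq_iff_eq_add', div_eq_inv_mul, ← smul_smul, ← hcs_eq, smul_smul,
    inv_mul_cancel₀ (norm_ne_zero_iff.mpr hw), one_smul]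

lemma exists_eq_add_smul (hα : 0 < α) (h : IsBestResponse α w z x) :
    ∃ c : ℝ, 0 ≤ c ∧ c * ‖w‖ ≤ α ∧ x = z + c • w := by
  by_cases hne : x = z
  · exact ⟨0, le_rfl, by rw [zero_mul]; exact hα.le, by rw [hne, zero_smul, add_zero]⟩
  obtain ⟨hw, -, hx⟩ := h.eq_add_smul_of_ne hα hne
  refine ⟨‖x - z‖ / ‖w‖, by positivity, ?_, hx⟩
  rw [div_mul_cancel₀ _ (norm_ne_zero_iff.mpr hw)]
  exact (h.crosses_boundary_of_ne hα hne).2.2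

lemma eq_of_not_mem_boundary (hα : 0 < α) (h : IsBestResponse α w z x)
    (hx : ¬(⟪x, w⟫ = α * ‖w‖ ∧ w ≠ 0)) : x = z := by
  by_contra hne
  obtain ⟨hw, hxw, -⟩ := h.eq_add_smul_of_ne hα hne
  exact hx ⟨hxw, hw⟩

end IsBestResponse

open scoped Classical in
noncomputable def surrogate (α s : ℝ) (w x : E) : E :=
  if s = -1 ∧ ⟪x, w⟫ = α * ‖w‖ ∧ w ≠ 0 then x - (α / ‖w‖) • w else x

lemma one_le_mul_inner_surrogate {s : ℝ} {wstar : E} (hα : 0 < α) (hs : s = 1 ∨ s = -1)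
    (hz : 1 ≤ s * ⟪z, wstar⟫) (h : IsBestResponse α w z x) (hw : 0 ≤ ⟪w, wstar⟫) :
    1 ≤ s * ⟪surrogate α s w x, wstar⟫ := by
  obtain ⟨c, hc, hcw, hx⟩ := h.exists_eq_add_smul hα
  rcases hs with rfl | rfl
  · have hxz : ⟪z, wstar⟫ ≤ ⟪x, wstar⟫ := by
      rw [hx, inner_add_left, real_inner_smul_left]
      linarith [mul_nonneg hc hw]
    rw [surrogate, if_neg (by norm_num)]
    linarith
  · by_cases hb : ⟪x, w⟫ = α * ‖w‖ ∧ w ≠ 0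
    · have hw' : 0 < ‖w‖ := norm_pos_iff.mpr hb.2
      have hcα : c - α / ‖w‖ ≤ 0 := by rwa [sub_nonpos, le_div_iff₀ hw']
      have hxz : ⟪x - (α / ‖w‖) • w, wstar⟫ ≤ ⟪z, wstar⟫ := by
        rw [hx, add_sub_assoc, ← sub_smul, inner_add_left, real_inner_smul_left]
        linarith [mul_nonpos_of_nonpos_of_nonneg hcα hw]
      rw [surrogate, if_pos ⟨rfl, hb⟩]
      linarith
    · rw [surrogate, if_neg (fun h => hb h.2), h.eq_of_not_mem_boundary hα hb]
      exact hz

end BestResponse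

open scoped Classical in
theorem strategic_perceptron_full_invariant_general
    (d : ℕ) (α : ℝ) (hα : 0 < α)
    (wstar : EuclideanSpace ℝ (Fin d))
    (s : ℕ → ℝ) (hs : ∀ t, s t = 1 ∨ s t = -1)
    (z : ℕ → EuclideanSpace ℝ (Fin d))
    (hzm : ∀ t, s t * ⟪z t, wstar⟫ ≥ 1)
    (x : ℕ → EuclideanSpace ℝ (Fin d))
    (w : ℕ → EuclideanSpace ℝ (Fin d))
    (mistake : ℕ → Prop)
    (xtilde : ℕ → EuclideanSpace ℝ (Fin d))
    (hw0 : w 0 = 0)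
    (hxt : ∀ t, xtilde t =
      if s t = -1 ∧ ⟪x t, w t⟫ = α * ‖w t‖ ∧ w t ≠ 0 then
        x t - (α / ‖w t‖) • w t
      else x t)
    (hupd : ∀ t, w (t + 1) = if mistake t then w t + s t • xtilde t else w t)
    (hbr : ∀ t, ∀ y : EuclideanSpace ℝ (Fin d),
      ((if ⟪y, w t⟫ ≥ α * ‖w t‖ then (1 : ℝ) else 0) - ‖y - z t‖ / α) ≤
        ((if ⟪x t, w t⟫ ≥ α * ‖w t‖ then (1 : ℝ) else 0) - ‖x t - z t‖ / α)) :
    ∀ t, ⟪w t, wstar⟫ ≥ 0 ∧ s t * ⟪xtilde t, wstar⟫ ≥ 1 := by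
  have hsurrogate : ∀ t, ⟪w t, wstar⟫ ≥ 0 → s t * ⟪xtilde t, wstar⟫ ≥ 1 := by
    intro t hwt
    have hx : xtilde t = surrogate α (s t) (w t) (x t) := by
      rw [hxt t, surrogate]
      congr 1 -- the two `if`s differ only in their `Decidable` instances
    rw [hx]
    exact one_le_mul_inner_surrogate hα (hs t) (hzm t) (hbr t) hwt
  have hw : ∀ t, ⟪w t, wstar⟫ ≥ 0 := by
    intro t
    induction t with
    | zero => simp [hw0]
    | succ t ih =>
      rw [hupd t]
      split_ifs
      · rw [inner_add_left, real_inner_smul_left]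
        linarith [hsurrogate t ih]
      · exact ih
  exact fun t => ⟨hw t, hsurrogate t (hw t)⟩

open scoped Classical in
theorem strategic_perceptron_full_invariant
    (d : ℕ) (α : ℝ) (hα : 0 < α)
    (wstar : EuclideanSpace ℝ (Fin d))
    (s : ℕ → ℝ) (hs : ∀ t, s t = 1 ∨ s t = -1)
    (z : ℕ → EuclideanSpace ℝ (Fin d))
    (hzm : ∀ t, s t * ⟪z t, wstar⟫ ≥ 1)
    (x : ℕ → EuclideanSpace ℝ (Fin d))
    (w : ℕ → EuclideanSpace ℝ (Fin d))
    (pos mistake : ℕ → Prop)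
    (xtilde : ℕ → EuclideanSpace ℝ (Fin d))
    (hw0 : w 0 = 0)
    (hpos : ∀ t, pos t ↔ ⟪x t, w t⟫ ≥ α * ‖w t‖)
    (hmis : ∀ t, mistake t ↔ ((pos t ∧ s t = -1) ∨ (¬ pos t ∧ s t = 1)))
    (hxt : ∀ t, xtilde t =
      if s t = -1 ∧ ⟪x t, w t⟫ = α * ‖w t‖ ∧ w t ≠ 0 then
        x t - (α / ‖w t‖) • w t
      else x t)
    (hupd : ∀ t, w (t + 1) = if mistake t then w t + s t • xtilde t else w t)
    (hbr : ∀ t, ∀ y : EuclideanSpace ℝ (Fin d),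
      ((if ⟪y, w t⟫ ≥ α * ‖w t‖ then (1 : ℝ) else 0) - ‖y - z t‖ / α) ≤
        ((if ⟪x t, w t⟫ ≥ α * ‖w t‖ then (1 : ℝ) else 0) - ‖x t - z t‖ / α)) :
    ∀ t, ⟪w t, wstar⟫ ≥ 0 ∧ s t * ⟪xtilde t, wstar⟫ ≥ 1 :=
  strategic_perceptron_full_invariant_general d α hα wstar s hs z hzm x w mistake xtilde hw0 hxt
    hupd hbr
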